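/- arXiv:2307.13267 — 2 statements merged into one kernel-verified Lean document; each statement's English description precedes it below -/
import Mathlib

section
/- The big-M constant M_j = max_{χ ∈ Y} ‖y_j − χ‖², where Y is the axis-aligned bounding box of all observations, is valid: for any centroids m_k lying in the bounding box Y and any assignment with w_{jk} = 0, the constraint d_{jk} ≥ ‖y_j − m_k‖² − M_j·(1 − w_{jk}) is satisfied by d_{jk} = 0. -/
/-- Validity of the big-M constant `M j = max_{χ ∈ Y} ‖y j − χ‖²`, where `Y` is the
axis-aligned bounding box of the observations: for any centroid `m ∈ Y` and any
assignment with `w = 0`, the big-M constraint is satisfied by `d = 0`. -/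
theorem kmeans_bigM_valid
    {J : Type*} [Fintype J] [Nonempty J] {n : ℕ}
    (y : J → EuclideanSpace ℝ (Fin n))
    (Y : Set (EuclideanSpace ℝ (Fin n)))
    (hY : Y = {χ | ∀ l : Fin n, (⨅ j, y j l) ≤ χ l ∧ χ l ≤ ⨆ j, y j l})
    (M : J → ℝ)
    (hM : ∀ j, M j = sSup {r : ℝ | ∃ χ ∈ Y, r = ‖y j - χ‖ ^ 2})
    (j : J) (m : EuclideanSpace ℝ (Fin n)) (hm : m ∈ Y)
    (w : ℝ) (hw : w = 0) :
    (0 : ℝ) ≥ ‖y j - m‖ ^ 2 - M j * (1 - w) := by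
  subst hw
  have hle : ‖y j - m‖ ^ 2 ≤ M j := by
    rw [hM]
    apply le_csSup
    · -- bounded above
      refine ⟨∑ l : Fin n, ((⨆ i, y i l) - (⨅ i, y i l)) ^ 2, ?_⟩
      rintro r ⟨χ, hχ, rfl⟩
      rw [hY] at hχ
      have hnorm : ‖y j - χ‖ ^ 2 = ∑ l : Fin n, (y j l - χ l) ^ 2 := by
        rw [EuclideanSpace.norm_eq, Real.sq_sqrt (by positivity)]
        simp [sq_abs]
      rw [hnorm]
      apply Finset.sum_le_sum
      intro l _
      have h1 : (⨅ i, y i l) ≤ y j l := ciInf_le (f := fun i => y i l) (Set.Finite.bddBelow (Set.finite_range _)) j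
      have h2 : y j l ≤ ⨆ i, y i l := le_ciSup (f := fun i => y i l) (Set.Finite.bddAbove (Set.finite_range _)) j
      obtain ⟨h3, h4⟩ := hχ l
      apply sq_le_sq'
      · linarith
      · linarith
    · exact ⟨m, hm, rfl⟩
  linarith
end

section
/- The MIQCP epigraph reformulation of K-means clustering is equivalent to the MINLP formulation: with valid big-M constants, the optimal value of minimizing Σ_{j,k} d_{jk} subject to d_{jk} ≥ ‖y_j − m_k‖² − M_j(1 − w_{jk}), d_{jk} ≥ 0, and Σ_k w_{jk} = 1 (with centroids constrained to the bounding box Y) equals the optimal value of minimizing Σ_{j,k} w_{jk}·‖y_j − m_k‖² subject to Σ_k w_{jk} = 1. -/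
/-!
Every feasible point of either problem is dominated by a feasible point of the other with the same
assignment `w`. Since `w ∈ {0, 1}`, the big-M constraint forces `d j k ≥ w j k * ‖y j - m k‖ ^ 2`.
Conversely, projecting each centroid coordinatewise onto the bounding box `Y` only moves it closer
to every data point, and then `d j k := w j k * ‖y j - m k‖ ^ 2` is feasible: when `w j k = 0` the
big-M constraint holds because `M j` bounds `‖y j - χ‖ ^ 2` on `Y`. Mutual domination gives equal
infima.
-/

open Finset

section Box

variable {ι : Type*}

lemma EuclideanSpace.norm_le_norm_of_forall_abs_le [Fintype ι] {u v : EuclideanSpace ℝ ι}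
    (h : ∀ i, |u i| ≤ |v i|) : ‖u‖ ≤ ‖v‖ := by
  rw [← sq_le_sq₀ (norm_nonneg u) (norm_nonneg v), PiLp.norm_sq_eq_of_L2, PiLp.norm_sq_eq_of_L2]
  exact sum_le_sum fun i _ => sq_le_sq.mpr (by simpa only [Real.norm_eq_abs, abs_abs] using h i)

def coordBox (lo hi : ι → ℝ) : Set (EuclideanSpace ℝ ι) :=
  {χ | ∀ i, lo i ≤ χ i ∧ χ i ≤ hi i}

def clampBox (lo hi : ι → ℝ) (c : EuclideanSpace ℝ ι) : EuclideanSpace ℝ ι :=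
  WithLp.toLp 2 fun i => max (lo i) (min (hi i) (c i))

lemma clampBox_mem_coordBox {lo hi : ι → ℝ} (h : lo ≤ hi) (c : EuclideanSpace ℝ ι) :
    clampBox lo hi c ∈ coordBox lo hi :=
  fun i => ⟨le_max_left _ _, max_le (h i) (min_le_left _ _)⟩

lemma norm_sub_clampBox_le [Fintype ι] {lo hi : ι → ℝ} {x : EuclideanSpace ℝ ι}
    (hx : x ∈ coordBox lo hi) (c : EuclideanSpace ℝ ι) : ‖x - clampBox lo hi c‖ ≤ ‖x - c‖ := by
  refine EuclideanSpace.norm_le_norm_of_forall_abs_le fun i => ?_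
  have hxi : max (lo i) (min (hi i) (x i)) = x i := by
    rw [min_eq_right (hx i).2, max_eq_right (hx i).1]
  calc |x i - max (lo i) (min (hi i) (c i))|
      = |max (lo i) (min (hi i) (x i)) - max (lo i) (min (hi i) (c i))| := by rw [hxi]
    _ ≤ |min (hi i) (x i) - min (hi i) (c i)| := by
        simpa using abs_max_sub_max_le_max (lo i) (min (hi i) (x i)) (lo i) (min (hi i) (c i))
    _ ≤ |x i - c i| := by simpa using abs_min_sub_min_le_max (hi i) (x i) (hi i) (c i)

lemma norm_sub_le_of_mem_coordBox [Fintype ι] {lo hi : ι → ℝ} {x χ : EuclideanSpace ℝ ι}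
    (hx : x ∈ coordBox lo hi) (hχ : χ ∈ coordBox lo hi) :
    ‖x - χ‖ ≤ ‖(WithLp.toLp 2 (hi - lo) : EuclideanSpace ℝ ι)‖ :=
  EuclideanSpace.norm_le_norm_of_forall_abs_le fun i => by
    obtain ⟨hlx, hxh⟩ := hx i
    obtain ⟨hlχ, hχh⟩ := hχ i
    show |x i - χ i| ≤ |hi i - lo i|
    rw [abs_of_nonneg (sub_nonneg.2 (hlx.trans hxh) : 0 ≤ hi i - lo i)]
    exact abs_sub_le_iff.2 ⟨by linarith, by linarith⟩

lemma bddAbove_sq_norm_sub_coordBox [Fintype ι] {lo hi : ι → ℝ} {x : EuclideanSpace ℝ ι}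
    (hx : x ∈ coordBox lo hi) :
    BddAbove {r : ℝ | ∃ χ ∈ coordBox lo hi, r = ‖x - χ‖ ^ 2} := by
  refine ⟨‖(WithLp.toLp 2 (hi - lo) : EuclideanSpace ℝ ι)‖ ^ 2, ?_⟩
  rintro r ⟨χ, hχ, rfl⟩
  gcongr
  exact norm_sub_le_of_mem_coordBox hx hχ

lemma mem_coordBox_iInf_iSup {J : Type*} [Finite J] (y : J → EuclideanSpace ℝ ι) (j : J) :
    y j ∈ coordBox (fun i => ⨅ j, y j i) (fun i => ⨆ j, y j i) :=
  fun i => ⟨ciInf_le (Finite.bddBelow_range _) j, le_ciSup (Finite.bddAbove_range (y · i)) j⟩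

lemma iInf_coord_le_iSup_coord {J : Type*} [Finite J] [Nonempty J] (y : J → EuclideanSpace ℝ ι) :
    (fun i => ⨅ j, y j i) ≤ fun i => ⨆ j, y j i :=
  fun _ => ciInf_le_ciSup (Finite.bddBelow_range _) (Finite.bddAbove_range _)

end Box

section BigM

variable {w q M d : ℝ}

lemma mul_le_of_bigM_le (hw : w ∈ ({0, 1} : Set ℝ)) (hd : q - M * (1 - w) ≤ d) (hd0 : 0 ≤ d) :
    w * q ≤ d := by
  rcases hw with rfl | rfl
  · simpa using hd0
  · simpa using hd

lemma bigM_le_mul (hw : w ∈ ({0, 1} : Set ℝ)) (hqM : q ≤ M) :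
    q - M * (1 - w) ≤ w * q := by
  rcases hw with rfl | rfl <;> simp [hqM]

end BigM

theorem kmeans_miqcp_eq_minlp_general
    {J K : Type*} [Fintype J] [Nonempty J] [Fintype K] {n : ℕ}
    (y : J → EuclideanSpace ℝ (Fin n))
    (Y : Set (EuclideanSpace ℝ (Fin n)))
    (hY : Y = {χ | ∀ l : Fin n, (⨅ j, y j l) ≤ χ l ∧ χ l ≤ ⨆ j, y j l})
    (M : J → ℝ)
    (hM : ∀ j, M j = sSup {r : ℝ | ∃ χ ∈ Y, r = ‖y j - χ‖ ^ 2}) :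
    sInf {v : ℝ | ∃ (w : J → K → ℝ) (m : K → EuclideanSpace ℝ (Fin n))
            (d : J → K → ℝ),
          (∀ j k, w j k ∈ ({0, 1} : Set ℝ)) ∧
          (∀ j, ∑ k, w j k = 1) ∧
          (∀ k, m k ∈ Y) ∧
          (∀ j k, d j k ≥ ‖y j - m k‖ ^ 2 - M j * (1 - w j k)) ∧
          (∀ j k, d j k ≥ 0) ∧
          v = ∑ j, ∑ k, d j k}
      =
    sInf {v : ℝ | ∃ (w : J → K → ℝ) (m : K → EuclideanSpace ℝ (Fin n)),
          (∀ j k, w j k ∈ ({0, 1} : Set ℝ)) ∧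
          (∀ j, ∑ k, w j k = 1) ∧
          v = ∑ j, ∑ k, w j k * ‖y j - m k‖ ^ 2} := by
  set lo : Fin n → ℝ := fun l => ⨅ j, y j l
  set hi : Fin n → ℝ := fun l => ⨆ j, y j l
  obtain rfl : Y = coordBox lo hi := hY
  have hM_ge : ∀ j, ∀ χ ∈ coordBox lo hi, ‖y j - χ‖ ^ 2 ≤ M j := fun j χ hχ =>
    (hM j).symm ▸ le_csSup (bddAbove_sq_norm_sub_coordBox (mem_coordBox_iInf_iSup y j))
      ⟨χ, hχ, rfl⟩
  apply csInf_eq_csInf_of_forall_exists_le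
  · rintro _ ⟨w, m, d, hw, hw_sum, -, hd, hd0, rfl⟩
    exact ⟨_, ⟨w, m, hw, hw_sum, rfl⟩, sum_le_sum fun j _ => sum_le_sum fun k _ =>
      mul_le_of_bigM_le (hw j k) (hd j k) (hd0 j k)⟩
  · rintro _ ⟨w, m, hw, hw_sum, rfl⟩
    have hw0 : ∀ j k, 0 ≤ w j k := fun j k => by
      rcases hw j k with h | h <;> simp_all
    let m' k := clampBox lo hi (m k)
    have hm' : ∀ k, m' k ∈ coordBox lo hi :=
      fun k => clampBox_mem_coordBox (iInf_coord_le_iSup_coord y) _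
    refine ⟨∑ j, ∑ k, w j k * ‖y j - m' k‖ ^ 2,
      ⟨w, m', _, hw, hw_sum, hm', fun j k => bigM_le_mul (hw j k) (hM_ge j _ (hm' k)),
        fun j k => mul_nonneg (hw0 j k) (sq_nonneg _), rfl⟩, ?_⟩
    gcongr with j _ k _
    · exact hw0 j k
    · exact norm_sub_clampBox_le (mem_coordBox_iInf_iSup y j) _

/-- Equivalence of the MIQCP epigraph reformulation and the MINLP formulation of
K-means clustering: with valid big-M constants and centroids constrained to the
bounding box of the data, the two optimal values coincide. -/
theorem kmeans_miqcp_eq_minlp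
    {J K : Type*} [Fintype J] [Nonempty J] [Fintype K] [Nonempty K] {n : ℕ}
    (y : J → EuclideanSpace ℝ (Fin n))
    (Y : Set (EuclideanSpace ℝ (Fin n)))
    (hY : Y = {χ | ∀ l : Fin n, (⨅ j, y j l) ≤ χ l ∧ χ l ≤ ⨆ j, y j l})
    (M : J → ℝ)
    (hM : ∀ j, M j = sSup {r : ℝ | ∃ χ ∈ Y, r = ‖y j - χ‖ ^ 2}) :
    sInf {v : ℝ | ∃ (w : J → K → ℝ) (m : K → EuclideanSpace ℝ (Fin n))
            (d : J → K → ℝ),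
          (∀ j k, w j k ∈ ({0, 1} : Set ℝ)) ∧
          (∀ j, ∑ k, w j k = 1) ∧
          (∀ k, m k ∈ Y) ∧
          (∀ j k, d j k ≥ ‖y j - m k‖ ^ 2 - M j * (1 - w j k)) ∧
          (∀ j k, d j k ≥ 0) ∧
          v = ∑ j, ∑ k, d j k}
      =
    sInf {v : ℝ | ∃ (w : J → K → ℝ) (m : K → EuclideanSpace ℝ (Fin n)),
          (∀ j k, w j k ∈ ({0, 1} : Set ℝ)) ∧
          (∀ j, ∑ k, w j k = 1) ∧
          v = ∑ j, ∑ k, w j k * ‖y j - m k‖ ^ 2} :=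
  kmeans_miqcp_eq_minlp_general y Y hY M hM
end
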